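/- arXiv:1510.05575 — 4 statements merged into one kernel-verified Lean document; each statement's English description precedes it below -/
import Mathlib

section
/- Let Φ : Q → Q be a measure preserving homeomorphism of the unit cube Q = [0,1]^n that is approximately differentiable almost everywhere. Then |det ap DΦ(x)| = 1 for almost every x ∈ Q. -/
open MeasureTheory Metric Set Filter Topology

noncomputable section

abbrev Euc (n : ℕ) := EuclideanSpace ℝ (Fin n)

def unitCube (n : ℕ) : Set (Euc n) := {x | ∀ i, x i ∈ Set.Icc (0:ℝ) 1}

/-- `x` is a density point of `S`. -/
def DensityPt {n : ℕ} (S : Set (Euc n)) (x : Euc n) : Prop :=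
  Tendsto (fun ρ : ℝ => volume (S ∩ ball x ρ) / volume (ball x ρ)) (𝓝[>] 0) (𝓝 1)

/-- `f` has approximate derivative `L` at `x`. -/
def HasApproxDerivAt {n : ℕ} (f : Euc n → Euc n) (L : Euc n →L[ℝ] Euc n) (x : Euc n) : Prop :=
  ∃ S : Set (Euc n), MeasurableSet S ∧ DensityPt S x ∧
    Tendsto (fun y => ‖f y - f x - L (y - x)‖ / ‖y - x‖) (𝓝[S \ {x}] x) (𝓝 0)

/-!
If `|det A| ≠ 1`, Mathlib's image estimates for maps approximating `A` on a set
(`addHaar_image_le_mul_of_det_lt`, `mul_le_addHaar_image_of_lt_det`) show that a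
measure-preserving map can approximate `A` only on a null set. Near a point of approximate
differentiability with derivative close to `A`, the map is `δ`-close to `A` outside a
`δ`-fraction of every small ball. For two nearby such points the two exceptional sets cannot
cover a ball between them, and a common good point `z` of both shows that the map really
approximates `A` on the set of these points. Countably many `A` (a Lindelöf subcover) and
rational radii then cover all points where `|det ap DΦ| ≠ 1`.
-/

open Module
open scoped ENNReal NNReal

section ApproxLinearSet

variable {E : Type*} [NormedAddCommGroup E] [NormedSpace ℝ E]

def exceptionalSet (f : E → E) (A : E →L[ℝ] E) (δ : ℝ≥0) (x : E) : Set E :=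
  {y | δ * ‖y - x‖ < ‖f y - f x - A (y - x)‖}

variable [FiniteDimensional ℝ E] [MeasurableSpace E] [BorelSpace E]
  (μ : Measure E) [μ.IsAddHaarMeasure]

/-- Only rational scales `ρ` are used, which keeps the set measurable. -/
def approxLinearSet (f : E → E) (A : E →L[ℝ] E) (δ : ℝ≥0) (r : ℝ) : Set E :=
  {x | ∀ ρ : ℚ, 0 < ρ → (ρ : ℝ) ≤ r →
    μ (exceptionalSet f A δ x ∩ ball x ρ) ≤ δ * μ (ball x ρ)}

lemma measurableSet_approxLinearSet {f : E → E} (hf : Measurable f) (A : E →L[ℝ] E)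
    (δ : ℝ≥0) (r : ℝ) : MeasurableSet (approxLinearSet μ f A δ r) := by
  have hexc : MeasurableSet {p : E × E | p.2 ∈ exceptionalSet f A δ p.1} :=
    measurableSet_lt (f := fun p : E × E => δ * ‖p.2 - p.1‖)
      (g := fun p : E × E => ‖f p.2 - f p.1 - A (p.2 - p.1)‖) (by fun_prop) (by fun_prop)
  have hball (ρ : ℝ) : MeasurableSet {p : E × E | p.2 ∈ ball p.1 ρ} :=
    measurableSet_lt (f := fun p : E × E => dist p.2 p.1) (by fun_prop) measurable_const
  simp only [approxLinearSet, ofPred_forall]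
  refine .iInter fun ρ => .iInter fun _ => .iInter fun _ => measurableSet_le ?_ ?_
  · exact measurable_measure_prodMk_left (hexc.inter (hball ρ))
  · simp only [Measure.addHaar_ball_center μ]
    exact measurable_const

variable {μ}

lemma exists_mem_ball_notMem_exceptionalSet {f : E → E} {A : E →L[ℝ] E} {δ : ℝ≥0} {r : ℝ}
    (hδ : 2 * 3 ^ finrank ℝ E * δ < 1) {x y : E} (hx : x ∈ approxLinearSet μ f A δ r)
    (hy : y ∈ approxLinearSet μ f A δ r) (hxy : 0 < dist y x) (hr : 2 * dist y x < r) :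
    ∃ z ∈ ball y (dist y x), z ∉ exceptionalSet f A δ x ∧ z ∉ exceptionalSet f A δ y := by
  set d := dist y x
  obtain ⟨ρ, hρd, hρ⟩ := exists_rat_btwn (lt_min (by linarith : 2 * d < 3 * d) hr)
  have hρpos : (0 : ℝ) < ρ := by linarith
  have hbig : μ (ball x ρ) ≤ μ (ball y (3 * d)) := by
    rw [Measure.addHaar_ball_center μ x, Measure.addHaar_ball_center μ y]
    exact measure_mono (ball_subset_ball (lt_min_iff.1 hρ).1.le)
  have hsmall : μ (ball y ρ) ≤ μ (ball y (3 * d)) :=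
    measure_mono (ball_subset_ball (lt_min_iff.1 hρ).1.le)
  have hlt : μ (exceptionalSet f A δ x ∩ ball x ρ ∪ exceptionalSet f A δ y ∩ ball y ρ)
      < μ (ball y d) := calc
    _ ≤ δ * μ (ball x ρ) + δ * μ (ball y ρ) :=
      (measure_union_le _ _).trans (add_le_add (hx ρ (mod_cast hρpos) (lt_min_iff.1 hρ).2.le)
        (hy ρ (mod_cast hρpos) (lt_min_iff.1 hρ).2.le))
    _ ≤ δ * μ (ball y (3 * d)) + δ * μ (ball y (3 * d)) := by gcongr
    _ = (2 * 3 ^ finrank ℝ E * δ : ℝ≥0) * μ (ball y d) := by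
      rw [Measure.addHaar_ball_mul_of_pos μ y three_pos, Measure.addHaar_ball_center μ y d,
        ENNReal.ofReal_pow zero_le_three, ENNReal.ofReal_ofNat]
      push_cast
      ring
    _ < 1 * μ (ball y d) :=
      ENNReal.mul_lt_mul_left (measure_ball_pos μ y hxy).ne' measure_ball_lt_top.ne
        (mod_cast hδ)
    _ = μ (ball y d) := one_mul _
  obtain ⟨z, hzy, hz⟩ := not_subset.1 fun h => (measure_mono h).not_gt hlt
  have hzx : z ∈ ball x ρ := by
    rw [mem_ball] at hzy ⊢
    linarith [dist_triangle z y x]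
  have hzy' : z ∈ ball y ρ := ball_subset_ball (by linarith) hzy
  exact ⟨z, hzy, fun h => hz (.inl ⟨h, hzx⟩), fun h => hz (.inr ⟨h, hzy'⟩)⟩

lemma approximatesLinearOn_approxLinearSet {f : E → E} {A : E →L[ℝ] E} {δ : ℝ≥0} {r : ℝ}
    (hδ : 2 * 3 ^ finrank ℝ E * δ < 1) (c : E) :
    ApproximatesLinearOn f A (approxLinearSet μ f A δ r ∩ ball c (r / 4)) (3 * δ) := by
  intro y hy x hx
  rcases eq_or_ne y x with rfl | hyx
  · simp
  have hd : 2 * dist y x < r := by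
    linarith [dist_triangle_right y x c, mem_ball.1 hy.2, mem_ball.1 hx.2]
  obtain ⟨z, hz, hzx, hzy⟩ :=
    exists_mem_ball_notMem_exceptionalSet hδ hx.1 hy.1 (dist_pos.2 hyx) hd
  simp only [exceptionalSet, mem_ofPred_eq, not_lt] at hzx hzy
  rw [mem_ball, dist_eq_norm, dist_eq_norm] at hz
  have hzx' : ‖z - x‖ ≤ 2 * ‖y - x‖ := by
    linarith [norm_sub_le_norm_sub_add_norm_sub z y x]
  calc ‖f y - f x - A (y - x)‖
      = ‖(f z - f x - A (z - x)) - (f z - f y - A (z - y))‖ := by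
        congr 1
        simp only [map_sub]
        abel
    _ ≤ δ * ‖z - x‖ + δ * ‖z - y‖ := (norm_sub_le _ _).trans (add_le_add hzx hzy)
    _ ≤ δ * (2 * ‖y - x‖) + δ * ‖y - x‖ := by gcongr
    _ = (3 * δ : ℝ≥0) * ‖y - x‖ := by push_cast; ring

variable (μ)

lemma eventually_measure_eq_zero_of_approximatesLinearOn {A : E →L[ℝ] E} (hA : |A.det| ≠ 1) :
    ∀ᶠ ε in 𝓝[>] (0 : ℝ≥0), ∀ (s : Set E) (f : E → E), ApproximatesLinearOn f A s ε →
      μ (f '' s) = μ s → μ s ≠ ∞ → μ s = 0 := by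
  rcases hA.lt_or_gt with hA | hA
  · obtain ⟨m, hdet, hm⟩ :=
      ENNReal.lt_iff_exists_nnreal_btwn.1 (ENNReal.ofReal_lt_one.2 hA)
    filter_upwards [addHaar_image_le_mul_of_det_lt μ A hdet] with ε hε s f hf hfs hs
    by_contra h0
    have := (hfs ▸ hε s f hf).trans_lt ((ENNReal.mul_lt_mul_iff_left h0 hs).2 hm)
    exact this.ne (one_mul _).symm
  · obtain ⟨m, hm, hdet⟩ :=
      ENNReal.lt_iff_exists_nnreal_btwn.1 ((ENNReal.one_lt_ofReal).2 hA)
    filter_upwards [mul_le_addHaar_image_of_lt_det μ A hdet] with ε hε s f hf hfs hs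
    by_contra h0
    have := ((ENNReal.mul_lt_mul_iff_left h0 hs).2 hm).trans_le (hfs ▸ hε s f hf)
    exact this.ne' (one_mul _).symm

lemma exists_pos_measure_approxLinearSet_inter_eq_zero {f : E → E} (hf : Measurable f)
    {U : Set E} (hU : MeasurableSet U) (hfU : ∀ s ⊆ U, MeasurableSet s → μ (f '' s) = μ s)
    {A : E →L[ℝ] E} (hA : |A.det| ≠ 1) :
    ∃ δ : ℝ≥0, 0 < δ ∧ ∀ r : ℝ, 0 < r → μ (approxLinearSet μ f A δ r ∩ U) = 0 := by
  obtain ⟨ε, hε, hεpos⟩ :=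
    ((eventually_measure_eq_zero_of_approximatesLinearOn μ hA).and self_mem_nhdsWithin).exists
  have hsmall : ∀ᶠ δ in 𝓝 (0 : ℝ≥0), 3 * δ < ε ∧ 2 * 3 ^ finrank ℝ E * δ < 1 := by
    refine (Tendsto.eventually_lt_const hεpos ?_).and (Tendsto.eventually_lt_const one_pos ?_)
    all_goals simpa using (continuous_const_mul _).tendsto (0 : ℝ≥0)
  obtain ⟨δ, ⟨h3δ, hδ⟩, hδpos⟩ :=
    ((hsmall.filter_mono nhdsWithin_le_nhds).and (self_mem_nhdsWithin (s := Ioi 0))).exists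
  refine ⟨δ, hδpos, fun r hr => measure_null_of_locally_null _ fun x _ => ?_⟩
  set s := approxLinearSet μ f A δ r ∩ U ∩ ball x (r / 4)
  refine ⟨s, inter_mem_nhdsWithin _ (ball_mem_nhds x (by positivity)), ?_⟩
  have hsU : s ⊆ U := fun y hy => hy.1.2
  have happrox : ApproximatesLinearOn f A s (3 * δ) :=
    (approximatesLinearOn_approxLinearSet hδ x).mono_set
      (inter_subset_inter_left _ inter_subset_left)
  have hs : MeasurableSet s :=
    ((measurableSet_approxLinearSet μ hf A δ r).inter hU).inter measurableSet_ball
  exact hε s f (happrox.mono_num h3δ.le) (hfU s hsU hs)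
    ((measure_mono inter_subset_right).trans_lt measure_ball_lt_top).ne

end ApproxLinearSet

lemma DensityPt.eventually_measure_diff_le {n : ℕ} {S : Set (Euc n)} {x : Euc n}
    (hS : MeasurableSet S) (hx : DensityPt S x) {δ : ℝ≥0∞} (hδ : 0 < δ) :
    ∀ᶠ ρ in 𝓝[>] 0, volume (ball x ρ \ S) ≤ δ * volume (ball x ρ) := by
  have hlt : 1 - δ < 1 := ENNReal.sub_lt_self ENNReal.one_ne_top one_ne_zero hδ.ne'
  filter_upwards [hx (Ioi_mem_nhds hlt), self_mem_nhdsWithin] with ρ hρ hρpos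
  have hS' : (1 - δ) * volume (ball x ρ) ≤ volume (S ∩ ball x ρ) :=
    ((ENNReal.lt_div_iff_mul_lt (.inl (measure_ball_pos volume x hρpos).ne')
      (.inl measure_ball_lt_top.ne)).1 hρ).le
  have hSfin : volume (S ∩ ball x ρ) ≠ ∞ :=
    ((measure_mono inter_subset_right).trans_lt measure_ball_lt_top).ne
  calc volume (ball x ρ \ S)
      = volume (ball x ρ) - volume (S ∩ ball x ρ) := by
        rw [← measure_inter_add_sdiff (ball x ρ) hS, inter_comm,
          ENNReal.add_sub_cancel_left hSfin]
    _ ≤ volume (ball x ρ) - (1 - δ) * volume (ball x ρ) := tsub_le_tsub_left hS' _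
    _ ≤ δ * volume (ball x ρ) := by
      rw [tsub_le_iff_right, ← add_mul]
      exact le_mul_of_one_le_left (by simp) le_add_tsub

lemma HasApproxDerivAt.congr_of_eventuallyEq {n : ℕ} {f g : Euc n → Euc n}
    {L : Euc n →L[ℝ] Euc n} {x : Euc n} (h : HasApproxDerivAt f L x) (hfg : g =ᶠ[𝓝 x] f) :
    HasApproxDerivAt g L x := by
  obtain ⟨S, hS, hdens, hlim⟩ := h
  refine ⟨S, hS, hdens, hlim.congr' ?_⟩
  filter_upwards [nhdsWithin_le_nhds hfg] with y hy
  rw [hy, hfg.eq_of_nhds]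

lemma HasApproxDerivAt.exists_mem_approxLinearSet {n : ℕ} {f : Euc n → Euc n}
    {L A : Euc n →L[ℝ] Euc n} {x : Euc n} (hf : HasApproxDerivAt f L x) {δ : ℝ≥0}
    (hδ : 0 < δ) (hA : ‖A - L‖ < δ / 2) :
    ∃ r : ℚ, 0 < r ∧ x ∈ approxLinearSet volume f A δ r := by
  obtain ⟨S, hS, hdens, hlim⟩ := hf
  have hnear : ∀ᶠ y in 𝓝 x, y ∈ S → y ∉ exceptionalSet f A δ x := by
    have h := eventually_nhdsWithin_iff.1 (hlim (Iio_mem_nhds (half_pos (NNReal.coe_pos.2 hδ))))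
    filter_upwards [h] with y hy hyS
    rcases eq_or_ne y x with rfl | hyx
    · simp [exceptionalSet]
    have hyx' : 0 < ‖y - x‖ := norm_pos_iff.2 (sub_ne_zero.2 hyx)
    have hL := (div_lt_iff₀ hyx').1 (hy ⟨hyS, hyx⟩)
    have hAL : ‖(A - L) (y - x)‖ ≤ δ / 2 * ‖y - x‖ :=
      ((A - L).le_opNorm _).trans (mul_le_mul_of_nonneg_right hA.le hyx'.le)
    simp only [exceptionalSet, mem_ofPred_eq, not_lt]
    calc ‖f y - f x - A (y - x)‖ = ‖(f y - f x - L (y - x)) - (A - L) (y - x)‖ := by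
          congr 1
          simp only [sub_apply]
          abel
      _ ≤ δ * ‖y - x‖ := by linarith [norm_sub_le (f y - f x - L (y - x)) ((A - L) (y - x))]
  obtain ⟨r₁, hr₁, hball₁⟩ := Metric.eventually_nhds_iff_ball.1 hnear
  obtain ⟨r₂, hr₂, hball₂⟩ := mem_nhdsGT_iff_exists_Ioo_subset.1
    (hdens.eventually_measure_diff_le hS (ENNReal.coe_pos.2 hδ))
  obtain ⟨r, hr, hrlt⟩ := exists_rat_btwn (lt_min hr₁ (mem_Ioi.1 hr₂))
  refine ⟨r, mod_cast hr, fun ρ hρ hρr => ?_⟩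
  calc volume (exceptionalSet f A δ x ∩ ball x ρ) ≤ volume (ball x ρ \ S) :=
        measure_mono fun y ⟨hy, hyb⟩ => ⟨hyb, fun hyS => hball₁ y
          (ball_subset_ball (hρr.trans (lt_min_iff.1 hrlt).1.le) hyb) hyS hy⟩
    _ ≤ δ * volume (ball x ρ) := hball₂ ⟨mod_cast hρ, hρr.trans_lt (lt_min_iff.1 hrlt).2⟩

theorem ae_abs_det_eq_one_of_hasApproxDerivAt {n : ℕ} {f : Euc n → Euc n} (hf : Measurable f)
    {U : Set (Euc n)} (hU : MeasurableSet U)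
    (hfU : ∀ s ⊆ U, MeasurableSet s → volume (f '' s) = volume s) {D : Euc n → Euc n →L[ℝ] Euc n}
    (hD : ∀ᵐ x ∂volume.restrict U, HasApproxDerivAt f (D x) x) :
    ∀ᵐ x ∂volume.restrict U, |(D x).det| = 1 := by
  choose δ hδ hnull using fun A : {A : Euc n →L[ℝ] Euc n // |A.det| ≠ 1} =>
    exists_pos_measure_approxLinearSet_inter_eq_zero volume hf hU hfU A.2
  obtain ⟨T, hTc, hT⟩ :=
    TopologicalSpace.isOpen_iUnion_countable (fun A => ball A.1 (δ A / 2)) fun _ => isOpen_ball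
  set Z := ⋃ A ∈ T, ⋃ r : ℚ, ⋃ (_ : 0 < r), approxLinearSet volume f A.1 (δ A) r ∩ U
  have hZ : volume Z = 0 := (measure_biUnion_null_iff hTc).2 fun A _ =>
    measure_iUnion_null fun r => measure_iUnion_null fun hr => hnull A r (mod_cast hr)
  filter_upwards [hD, ae_restrict_of_ae (measure_eq_zero_iff_ae_notMem.1 hZ),
    ae_restrict_mem hU] with x hx hxZ hxU
  by_contra hdet
  have hDx : D x ∈ ⋃ A ∈ T, ball A.1 (δ A / 2) := by
    rw [hT]
    exact mem_iUnion.2 ⟨⟨D x, hdet⟩, mem_ball_self (half_pos (hδ _))⟩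
  obtain ⟨A, hAT, hxA⟩ := mem_iUnion₂.1 hDx
  rw [mem_ball, dist_eq_norm'] at hxA
  obtain ⟨r, hr, hxr⟩ := hx.exists_mem_approxLinearSet (hδ A) hxA
  exact hxZ (mem_biUnion hAT (mem_iUnion₂.2 ⟨r, hr, hxr, hxU⟩))

lemma isClosed_unitCube (n : ℕ) : IsClosed (unitCube n) := by
  simp only [unitCube, ofPred_forall]
  exact isClosed_iInter fun i => isClosed_Icc.preimage (EuclideanSpace.proj i).continuous

lemma convex_unitCube (n : ℕ) : Convex ℝ (unitCube n) := by
  simp only [unitCube, ofPred_forall]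
  exact convex_iInter fun i => (convex_Icc 0 1).linear_preimage (EuclideanSpace.proj i).toLinearMap

theorem stmt2_general (n : ℕ) (Φ : Euc n → Euc n)
    (hcont : ContinuousOn Φ (unitCube n))
    (hmp : ∀ A ⊆ unitCube n, MeasurableSet A → volume (Φ '' A) = volume A)
    (D : Euc n → (Euc n →L[ℝ] Euc n))
    (hD : ∀ᵐ x ∂(volume.restrict (unitCube n)), HasApproxDerivAt Φ (D x) x) :
    ∀ᵐ x ∂(volume.restrict (unitCube n)), |(D x).det| = 1 := by
  classical
  have hQ := (isClosed_unitCube n).measurableSet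
  -- Extending `Φ` by `0` off the cube makes it measurable and changes nothing at interior
  -- points, and the boundary of the cube is null.
  set f := (unitCube n).piecewise Φ 0
  have hfΦ : EqOn f Φ (unitCube n) := piecewise_eqOn _ _ _
  have hint : ∀ᵐ x ∂volume.restrict (unitCube n), x ∈ interior (unitCube n) :=
    ae_restrict_of_ae_eq_of_ae_restrict
      (interior_ae_eq_of_null_frontier ((convex_unitCube n).addHaar_frontier volume))
      (ae_restrict_mem measurableSet_interior)
  refine ae_abs_det_eq_one_of_hasApproxDerivAt
    (hcont.measurable_piecewise continuousOn_const hQ) hQ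
    (fun s hs hsm => (image_congr fun x hx => hfΦ (hs hx)) ▸ hmp s hs hsm) ?_
  filter_upwards [hD, hint] with x hx hxint
  exact hx.congr_of_eventuallyEq (eventually_of_mem (mem_interior_iff_mem_nhds.1 hxint) hfΦ)

theorem stmt2 (n : ℕ) (Φ Ψ : Euc n → Euc n)
    (hmap : MapsTo Φ (unitCube n) (unitCube n)) (hmap' : MapsTo Ψ (unitCube n) (unitCube n))
    (hcont : ContinuousOn Φ (unitCube n)) (hcont' : ContinuousOn Ψ (unitCube n))
    (hinv : ∀ x ∈ unitCube n, Ψ (Φ x) = x ∧ Φ (Ψ x) = x)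
    (hsurj : SurjOn Φ (unitCube n) (unitCube n))
    (hmp : ∀ A ⊆ unitCube n, MeasurableSet A → volume (Φ '' A) = volume A)
    (D : Euc n → (Euc n →L[ℝ] Euc n))
    (hD : ∀ᵐ x ∂(volume.restrict (unitCube n)), HasApproxDerivAt Φ (D x) x) :
    ∀ᵐ x ∂(volume.restrict (unitCube n)), |(D x).det| = 1 :=
  stmt2_general n Φ hcont hmp D hD
end
end

section
/- Let Ω ⊆ ℝ^n be open, Φ : Ω → ℝ^n a C^∞ diffeomorphism with M = ‖DΦ‖_Ω + ‖(DΦ)^{-1}‖_Ω + ‖D²Φ‖_Ω < ∞, and let B = B(0,r) ⊂⊂ Ω with r < (10(M+1)²)^{-1}. Let φ : ℝ → [0,1] be smooth, non-decreasing, with ‖φ′‖_∞ < 9, φ(t) = 0 for t ≤ 3/5 and φ(t) = 1 for t ≥ 4/5. Define G(x) = T(x) + φ(|x|/r)(Φ(x) − T(x)) where T(x) = Φ(0) + DΦ(0)x. Then for all x, y ∈ B̄, |G(x) − G(y)| ≥ ½ |DΦ(0)(x − y)|; in particular G is injective on B̄. -/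
open MeasureTheory Metric Set Filter Topology

noncomputable section

lemma deriv_zero_of_const_Iic {φ : ℝ → ℝ} (hφ : Differentiable ℝ φ) {a c : ℝ}
    (h : ∀ t ≤ a, φ t = c) : ∀ t ≤ a, deriv φ t = 0 := by
  intro t ht
  rcases eq_or_lt_of_le ht with rfl | hlt
  · have h1 : HasDerivWithinAt φ (deriv φ t) (Set.Iic t) t :=
      (hφ t).hasDerivAt.hasDerivWithinAt
    have h2 : HasDerivWithinAt φ 0 (Set.Iic t) t :=
      (hasDerivWithinAt_const t _ c).congr (fun y hy => h y hy) (h t le_rfl)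
    rw [← h1.derivWithin (uniqueDiffOn_Iic t t Set.self_mem_Iic),
      h2.derivWithin (uniqueDiffOn_Iic t t Set.self_mem_Iic)]
  · have heq : φ =ᶠ[nhds t] fun _ => c := by
      filter_upwards [Iio_mem_nhds hlt] with y hy using h y (le_of_lt hy)
    rw [heq.deriv_eq, deriv_const]

lemma deriv_zero_of_const_Ici {φ : ℝ → ℝ} (hφ : Differentiable ℝ φ) {a c : ℝ}
    (h : ∀ t ≥ a, φ t = c) : ∀ t ≥ a, deriv φ t = 0 := by
  intro t ht
  rcases eq_or_lt_of_le ht with rfl | hlt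
  · have h1 : HasDerivWithinAt φ (deriv φ a) (Set.Ici a) a :=
      (hφ a).hasDerivAt.hasDerivWithinAt
    have h2 : HasDerivWithinAt φ 0 (Set.Ici a) a :=
      (hasDerivWithinAt_const a _ c).congr (fun y hy => h y hy) (h a le_rfl)
    rw [← h1.derivWithin (uniqueDiffOn_Ici a a Set.self_mem_Ici),
      h2.derivWithin (uniqueDiffOn_Ici a a Set.self_mem_Ici)]
  · have heq : φ =ᶠ[nhds t] fun _ => c := by
      filter_upwards [Ioi_mem_nhds hlt] with y hy using h y (le_of_lt hy)
    rw [heq.deriv_eq, deriv_const]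

set_option maxHeartbeats 1000000 in
theorem stmt9 (n : ℕ) (Ω : Set (Euc n)) (hΩ : IsOpen Ω) (Φ : Euc n → Euc n)
    (hΦ : ContDiffOn ℝ (⊤ : ℕ∞) Φ Ω) (hinj : InjOn Φ Ω)
    (M : ℝ)
    (hMD : ∀ x ∈ Ω, ‖fderiv ℝ Φ x‖ ≤ M)
    (hMI : ∀ x ∈ Ω, ∀ v : Euc n, ‖v‖ ≤ M * ‖fderiv ℝ Φ x v‖)
    (hM2 : ∀ x ∈ Ω, ‖iteratedFDeriv ℝ 2 Φ x‖ ≤ M)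
    (r : ℝ) (hr0 : 0 < r) (hball : closedBall (0 : Euc n) r ⊆ Ω)
    (hr : r < (10 * (M + 1) ^ 2)⁻¹)
    (φ : ℝ → ℝ) (hφsmooth : ContDiff ℝ (⊤ : ℕ∞) φ) (hφmono : Monotone φ)
    (hφ01 : ∀ t, φ t ∈ Set.Icc (0:ℝ) 1)
    (hφ' : ∀ t, |deriv φ t| < 9)
    (hφ0 : ∀ t ≤ (3:ℝ)/5, φ t = 0) (hφ1 : ∀ t ≥ (4:ℝ)/5, φ t = 1)
    (G : Euc n → Euc n)
    (hG : ∀ x, G x = (Φ 0 + fderiv ℝ Φ 0 x) +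
      φ (‖x‖ / r) • (Φ x - (Φ 0 + fderiv ℝ Φ 0 x))) :
    (∀ x ∈ closedBall (0 : Euc n) r, ∀ y ∈ closedBall (0 : Euc n) r,
      (1/2) * ‖fderiv ℝ Φ 0 (x - y)‖ ≤ ‖G x - G y‖) ∧
    InjOn G (closedBall (0 : Euc n) r) := by
  have h0Ω : (0 : Euc n) ∈ Ω := hball (mem_closedBall_self hr0.le)
  have hM0 : 0 ≤ M := le_trans (norm_nonneg _) (hMD 0 h0Ω)
  have hφdiff : Differentiable ℝ φ := hφsmooth.differentiable (by simp)
  have hd0 : ∀ t ≤ (3:ℝ)/5, deriv φ t = 0 := deriv_zero_of_const_Iic hφdiff hφ0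
  have hd1 : ∀ t ≥ (4:ℝ)/5, deriv φ t = 0 := deriv_zero_of_const_Ici hφdiff hφ1
  have hΦdiff : ∀ z ∈ Ω, HasFDerivAt Φ (fderiv ℝ Φ z) z := fun z hz =>
    ((hΦ.contDiffAt (hΩ.mem_nhds hz)).differentiableAt (by simp)).hasFDerivAt
  set B := closedBall (0 : Euc n) r with hBdef
  -- Lipschitz bound on the derivative
  have hDlip : ∀ x ∈ B, ‖fderiv ℝ Φ x - fderiv ℝ Φ 0‖ ≤ M * ‖x‖ := by
    intro x hx
    have hf : ∀ z ∈ B, HasFDerivWithinAt (fderiv ℝ Φ) (fderiv ℝ (fderiv ℝ Φ) z) B z := by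
      intro z hz
      have hz' : ContDiffAt ℝ (⊤ : ℕ∞) Φ z := hΦ.contDiffAt (hΩ.mem_nhds (hball hz))
      have h1 : ContDiffAt ℝ 1 (fderiv ℝ Φ) z := hz'.fderiv_right (by exact WithTop.coe_le_coe.mpr (le_top : ((1 + 1 : ℕ) : ℕ∞) ≤ ⊤))
      exact (h1.differentiableAt one_ne_zero).hasFDerivAt.hasFDerivWithinAt
    have hbound : ∀ z ∈ B, ‖fderiv ℝ (fderiv ℝ Φ) z‖ ≤ M := by
      intro z hz
      have e1 : ‖iteratedFDeriv ℝ 1 (fderiv ℝ Φ) z‖ = ‖iteratedFDeriv ℝ 2 Φ z‖ :=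
        norm_iteratedFDeriv_fderiv
      have e2 : ‖iteratedFDeriv ℝ 0 (fderiv ℝ (fderiv ℝ Φ)) z‖
          = ‖iteratedFDeriv ℝ 1 (fderiv ℝ Φ) z‖ := norm_iteratedFDeriv_fderiv
      rw [norm_iteratedFDeriv_zero] at e2
      rw [e2, e1]; exact hM2 z (hball hz)
    have := (convex_closedBall (0 : Euc n) r).norm_image_sub_le_of_norm_hasFDerivWithin_le
      hf hbound (mem_closedBall_self hr0.le) hx
    rwa [sub_zero] at this
  -- Taylor estimate with 1/2
  have hTay : ∀ x ∈ B, ‖Φ x - Φ 0 - fderiv ℝ Φ 0 x‖ ≤ M / 2 * ‖x‖ ^ 2 := by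
    intro x hx
    have hxr : ‖x‖ ≤ r := mem_closedBall_zero_iff.mp hx
    have hmem : ∀ t ∈ Set.Icc (0:ℝ) 1, t • x ∈ B := by
      intro t ht
      simp only [hBdef, mem_closedBall, dist_zero_right, norm_smul, Real.norm_eq_abs]
      calc |t| * ‖x‖ ≤ 1 * r := by
            apply mul_le_mul (abs_le.2 ⟨by linarith [ht.1], ht.2⟩) hxr (norm_nonneg x) one_pos.le
        _ = r := one_mul r
    set v := fderiv ℝ Φ 0 x with hv
    set ψ' := fun t : ℝ => fderiv ℝ Φ (t • x) x - v with hψ'def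
    have hψ : ∀ t ∈ uIcc (0:ℝ) 1, HasDerivAt (fun t : ℝ => Φ (t • x) - t • v) (ψ' t) t := by
      intro t ht
      rw [uIcc_of_le zero_le_one] at ht
      have h1 : HasDerivAt (fun s : ℝ => s • x) x t := by
        simpa using (hasDerivAt_id t).smul_const x
      have h2 : HasFDerivAt Φ (fderiv ℝ Φ (t • x)) (t • x) := hΦdiff _ (hball (hmem t ht))
      have h3 := h2.comp_hasDerivAt t h1
      have h4 : HasDerivAt (fun s : ℝ => s • v) v t := by
        simpa using (hasDerivAt_id t).smul_const v
      exact h3.sub h4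
    have hcont : ContinuousOn ψ' (uIcc (0:ℝ) 1) := by
      have hc1 : ContinuousOn (fderiv ℝ Φ) Ω := hΦ.continuousOn_fderiv_of_isOpen hΩ (by simp)
      have hc2 : ContinuousOn (fun t : ℝ => fderiv ℝ Φ (t • x)) (uIcc (0:ℝ) 1) := by
        apply hc1.comp (Continuous.continuousOn (continuous_id.smul continuous_const))
        intro t ht
        rw [uIcc_of_le zero_le_one] at ht
        exact hball (hmem t ht)
      exact (((ContinuousLinearMap.apply ℝ (Euc n) x).continuous.comp_continuousOn hc2)).sub
        continuousOn_const
    have hint : IntervalIntegrable ψ' volume 0 1 := hcont.intervalIntegrable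
    have heq : ∫ t in (0:ℝ)..1, ψ' t
        = (Φ ((1:ℝ) • x) - (1:ℝ) • v) - (Φ ((0:ℝ) • x) - (0:ℝ) • v) :=
      intervalIntegral.integral_eq_sub_of_hasDerivAt hψ hint
    have hbd : ‖∫ t in (0:ℝ)..1, ψ' t‖ ≤ M * ‖x‖ ^ 2 * (1/2) := by
      have h2 : ∫ t in (0:ℝ)..1, M * ‖x‖ ^ 2 * t = M * ‖x‖ ^ 2 * (1/2) := by
        rw [intervalIntegral.integral_const_mul, integral_id]; ring
      have h1 : ‖∫ t in (0:ℝ)..1, ψ' t‖ ≤ |∫ t in (0:ℝ)..1, M * ‖x‖ ^ 2 * t| := by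
        refine (intervalIntegral.norm_integral_le_of_norm_le (g := fun t => M * ‖x‖ ^ 2 * t) zero_le_one ?_ ?_).trans (le_abs_self _)
        swap
        · apply ContinuousOn.intervalIntegrable
          exact (continuousOn_const.mul continuousOn_id)
        filter_upwards with t ht
        have ht1 : t ∈ Set.Icc (0:ℝ) 1 := ⟨ht.1.le, ht.2⟩
        have hb1 : ‖fderiv ℝ Φ (t • x) - fderiv ℝ Φ 0‖ ≤ M * ‖t • x‖ := hDlip _ (hmem t ht1)
        have : ‖ψ' t‖ ≤ ‖fderiv ℝ Φ (t • x) - fderiv ℝ Φ 0‖ * ‖x‖ := by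
          have e : ψ' t = (fderiv ℝ Φ (t • x) - fderiv ℝ Φ 0) x := by
            show fderiv ℝ Φ (t • x) x - v = _
            rw [ContinuousLinearMap.sub_apply, hv]
          rw [e]
          exact ContinuousLinearMap.le_opNorm _ x
        calc ‖ψ' t‖ ≤ ‖fderiv ℝ Φ (t • x) - fderiv ℝ Φ 0‖ * ‖x‖ := this
          _ ≤ (M * ‖t • x‖) * ‖x‖ := by
              apply mul_le_mul_of_nonneg_right hb1 (norm_nonneg x)
          _ = M * ‖x‖ ^ 2 * t := by
              rw [norm_smul, Real.norm_eq_abs, abs_of_pos ht.1]; ring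
      rw [h2, abs_of_nonneg (by positivity)] at h1
      exact h1
    rw [heq] at hbd
    calc ‖Φ x - Φ 0 - fderiv ℝ Φ 0 x‖
        = ‖(Φ ((1:ℝ) • x) - (1:ℝ) • v) - (Φ ((0:ℝ) • x) - (0:ℝ) • v)‖ := by
          simp [hv]; abel_nf
      _ ≤ M * ‖x‖ ^ 2 * (1/2) := hbd
      _ = M / 2 * ‖x‖ ^ 2 := by ring
  -- the perturbation L and its derivative bound
  set A := fderiv ℝ Φ 0 with hA
  set L : Euc n → Euc n := fun z => φ (‖z‖ / r) • (Φ z - Φ 0 - A z) with hLdef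
  have hLd : ∀ x ∈ B, ∃ f' : Euc n →L[ℝ] Euc n,
      HasFDerivWithinAt L f' B x ∧ ‖f'‖ ≤ 4 * (M * r) := by
    intro x hx
    have hxr : ‖x‖ ≤ r := mem_closedBall_zero_iff.mp hx
    by_cases hsmall : ‖x‖ < 3 * r / 5
    · refine ⟨0, ?_, by rw [norm_zero]; positivity⟩
      have hLz : ∀ y : Euc n, ‖y‖ < 3 * r / 5 → L y = 0 := by
        intro y hy
        have h35 : ‖y‖ / r ≤ 3 / 5 := by
          rw [div_le_div_iff₀ hr0 (by norm_num : (0:ℝ) < 5)]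
          linarith
        simp [hLdef, hφ0 _ h35]
      have h0 : HasFDerivWithinAt (fun _ : Euc n => (0 : Euc n)) (0 : Euc n →L[ℝ] Euc n) B x :=
        (hasFDerivWithinAt_const (0 : Euc n) x B)
      apply h0.congr_of_eventuallyEq
      · have hmem : Metric.ball (0 : Euc n) (3 * r / 5) ∈ 𝓝[B] x :=
          nhdsWithin_le_nhds (isOpen_ball.mem_nhds (by simpa using hsmall))
        filter_upwards [hmem] with y hy
        exact hLz y (by simpa using hy)
      · exact hLz x hsmall
    · have hx0 : x ≠ 0 := by
        intro h
        rw [h, norm_zero] at hsmall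
        apply hsmall; positivity
      set N := fderiv ℝ (norm : Euc n → ℝ) x with hN'
      have hN : HasFDerivAt (norm : Euc n → ℝ) N x :=
        (((contDiffAt_norm ℝ hx0).differentiableAt (n := 1) one_ne_zero)).hasFDerivAt
      have hNle : ‖N‖ ≤ 1 := by
        have := hN.le_of_lipschitz lipschitzWith_one_norm
        simpa using this
      have hh : HasFDerivAt (fun y : Euc n => ‖y‖ / r) (r⁻¹ • N) x := by
        refine (hN.const_smul (r⁻¹)).congr_of_eventuallyEq ?_
        filter_upwards with y
        simp [div_eq_inv_mul]
      have hc : HasFDerivAt (fun y : Euc n => φ (‖y‖ / r))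
          ((deriv φ (‖x‖ / r)) • (r⁻¹ • N)) x :=
        ((hφdiff (‖x‖ / r)).hasDerivAt).comp_hasFDerivAt x hh
      have hg : HasFDerivAt (fun y : Euc n => Φ y - Φ 0 - A y) (fderiv ℝ Φ x - A) x :=
        ((hΦdiff x (hball hx)).sub_const (Φ 0)).sub A.hasFDerivAt
      have hLx : HasFDerivAt L
          (φ (‖x‖ / r) • (fderiv ℝ Φ x - A) +
            ((deriv φ (‖x‖ / r)) • (r⁻¹ • N)).smulRight (Φ x - Φ 0 - A x)) x := by
        rw [hLdef]
        exact hc.smul hg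
      refine ⟨_, hLx.hasFDerivWithinAt, ?_⟩
      have hterm1 : ‖φ (‖x‖ / r) • (fderiv ℝ Φ x - A)‖ ≤ M * r := by
        rw [norm_smul, Real.norm_eq_abs]
        have h01 := hφ01 (‖x‖ / r)
        have habs : |φ (‖x‖ / r)| ≤ 1 := abs_le.2 ⟨by linarith [h01.1], h01.2⟩
        calc |φ (‖x‖ / r)| * ‖fderiv ℝ Φ x - A‖ ≤ 1 * (M * ‖x‖) := by
              apply mul_le_mul habs (hDlip x hx) (norm_nonneg _) one_pos.le
          _ = M * ‖x‖ := one_mul _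
          _ ≤ M * r := mul_le_mul_of_nonneg_left hxr hM0
      have hterm2 : ‖((deriv φ (‖x‖ / r)) • (r⁻¹ • N)).smulRight (Φ x - Φ 0 - A x)‖
          ≤ 72 / 25 * (M * r) := by
        rw [ContinuousLinearMap.norm_smulRight_apply]
        by_cases hder : deriv φ (‖x‖ / r) = 0
        · rw [hder]
          simp
          positivity
        · have ht4 : ‖x‖ / r < 4 / 5 := by
            by_contra hcon
            exact hder (hd1 _ (le_of_not_gt hcon))
          have hx45 : ‖x‖ ≤ 4 * r / 5 := by
            rw [div_lt_div_iff₀ hr0 (by norm_num : (0:ℝ) < 5)] at ht4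
            linarith
          have h9 : |deriv φ (‖x‖ / r)| ≤ 9 := (hφ' _).le
          have hTx : ‖Φ x - Φ 0 - A x‖ ≤ M / 2 * ‖x‖ ^ 2 := hTay x hx
          have hsq : ‖x‖ ^ 2 ≤ (4 * r / 5) ^ 2 := by
            apply sq_le_sq' (by linarith [norm_nonneg x]) hx45
          have hNs : ‖(deriv φ (‖x‖ / r)) • (r⁻¹ • N)‖ ≤ 9 * r⁻¹ := by
            rw [norm_smul, norm_smul, Real.norm_eq_abs, Real.norm_eq_abs,
              abs_of_nonneg (inv_nonneg.2 hr0.le)]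
            calc |deriv φ (‖x‖ / r)| * (r⁻¹ * ‖N‖) ≤ 9 * (r⁻¹ * 1) := by
                  apply mul_le_mul h9 (by nlinarith [inv_nonneg.2 hr0.le]) (by positivity)
                    (by norm_num)
              _ = 9 * r⁻¹ := by ring
          calc ‖(deriv φ (‖x‖ / r)) • (r⁻¹ • N)‖ * ‖Φ x - Φ 0 - A x‖
              ≤ (9 * r⁻¹) * (M / 2 * (4 * r / 5) ^ 2) := by
                apply mul_le_mul hNs (hTx.trans (by nlinarith)) (norm_nonneg _) (by positivity)
            _ = 72 / 25 * (M * r) := by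
                field_simp
                ring
      calc ‖φ (‖x‖ / r) • (fderiv ℝ Φ x - A) +
            ((deriv φ (‖x‖ / r)) • (r⁻¹ • N)).smulRight (Φ x - Φ 0 - A x)‖
          ≤ M * r + 72 / 25 * (M * r) := le_trans (norm_add_le _ _) (by linarith [hterm1, hterm2])
        _ ≤ 4 * (M * r) := by nlinarith
  choose! D hD1 hD2 using hLd
  have hLlip : ∀ x ∈ B, ∀ y ∈ B, ‖L x - L y‖ ≤ 4 * (M * r) * ‖x - y‖ := by
    intro x hx y hy
    exact (convex_closedBall (0 : Euc n) r).norm_image_sub_le_of_norm_hasFDerivWithin_le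
      hD1 hD2 hy hx
  have hGL : ∀ x y : Euc n, G x - G y = A (x - y) + (L x - L y) := by
    intro x y
    rw [hG x, hG y, map_sub]
    simp only [hLdef, sub_add_eq_sub_sub]
    abel
  have hc25 : 4 * (M * r) * M ≤ 2 / 5 := by
    have hpos : (0:ℝ) < 10 * (M + 1) ^ 2 := by positivity
    have h5 : r * (10 * (M + 1) ^ 2) < 1 := by
      rw [← lt_div_iff₀ hpos]
      rw [inv_eq_one_div] at hr
      linarith
    nlinarith [sq_nonneg M, hr0.le, hM0]
  have hkey : ∀ x ∈ B, ∀ y ∈ B, ‖L x - L y‖ ≤ 2 / 5 * ‖A (x - y)‖ := by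
    intro x hx y hy
    have h1 := hLlip x hx y hy
    have h2 : ‖x - y‖ ≤ M * ‖A (x - y)‖ := hMI 0 h0Ω (x - y)
    have hAnn : 0 ≤ ‖A (x - y)‖ := norm_nonneg _
    have h3 : 4 * (M * r) * ‖x - y‖ ≤ 4 * (M * r) * (M * ‖A (x - y)‖) :=
      mul_le_mul_of_nonneg_left h2 (by positivity)
    nlinarith
  have main : ∀ x ∈ B, ∀ y ∈ B, (1/2) * ‖A (x - y)‖ ≤ ‖G x - G y‖ := by
    intro x hx y hy
    have h1 := hkey x hx y hy
    have h2 : ‖A (x - y)‖ - ‖L x - L y‖ ≤ ‖G x - G y‖ := by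
      rw [hGL x y]
      have h3 := norm_sub_norm_le (A (x - y)) (-(L x - L y))
      rw [sub_neg_eq_add, norm_neg] at h3
      exact h3
    have hAnn : 0 ≤ ‖A (x - y)‖ := norm_nonneg _
    linarith
  refine ⟨main, ?_⟩
  intro x hx y hy hxy
  have h := main x hx y hy
  rw [hxy, sub_self, norm_zero] at h
  have hAnn : 0 ≤ ‖A (x - y)‖ := norm_nonneg _
  have h2 : ‖A (x - y)‖ = 0 := by linarith
  have h3 : ‖x - y‖ ≤ M * ‖A (x - y)‖ := hMI 0 h0Ω (x - y)
  rw [h2, mul_zero] at h3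
  have h4 : ‖x - y‖ = 0 := le_antisymm h3 (norm_nonneg _)
  exact sub_eq_zero.mp (norm_eq_zero.mp h4)
end
end

section
/- Let Q = [0,1]^n, and for each k let 𝒬_k ⊆ Q be a compact set that is a disjoint union of 2^{kn} closed cubes of edge length α_k = (2^{k+1}−1)^{-1}, with 𝒬_{k+1} ⊆ 𝒬_k. Then A = ∩_k 𝒬_k is a compact set of Lebesgue measure 2^{-n}. -/
open MeasureTheory Metric Set Filter Topology

noncomputable section

/-- Closed cube with lower corner `a` and edge length `s`. -/
def cube (n : ℕ) (a : Euc n) (s : ℝ) : Set (Euc n) :=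
  {x | ∀ j, x j ∈ Set.Icc (a j) (a j + s)}

/-! The measure of `⋂ k, 𝒬 k` is the limit of the measures `2^{kn} α_k^n = (2^k α_k)^n` of the
nested compact sets `𝒬 k`, and `2^k α_k = (2 - 2^{-k})⁻¹ → 1/2`. -/

lemma cube_eq_preimage_pi (n : ℕ) (a : Euc n) (s : ℝ) :
    cube n a s = (MeasurableEquiv.toLp 2 (Fin n → ℝ)).symm ⁻¹'
      univ.pi fun j => Icc (a j) (a j + s) := by
  ext x
  simp [cube, Pi.le_def, forall_and]

lemma measurableSet_cube (n : ℕ) (a : Euc n) (s : ℝ) : MeasurableSet (cube n a s) := by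
  rw [cube_eq_preimage_pi]
  exact (MeasurableEquiv.toLp 2 (Fin n → ℝ)).symm.measurable
    (MeasurableSet.univ_pi fun _ => measurableSet_Icc)

lemma volume_cube (n : ℕ) (a : Euc n) (s : ℝ) :
    volume (cube n a s) = ENNReal.ofReal s ^ n := by
  rw [cube_eq_preimage_pi, (EuclideanSpace.volume_preserving_symm_measurableEquiv_toLp
      (Fin n)).measure_preimage (MeasurableSet.univ_pi fun _ => measurableSet_Icc).nullMeasurableSet,
    volume_pi_pi]
  simp [Real.volume_Icc]

lemma volume_iUnion_cube {ι : Type*} [Fintype ι] (n : ℕ) (c : ι → Euc n) (s : ℝ)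
    (hdisj : Pairwise fun i j => Disjoint (cube n (c i) s) (cube n (c j) s)) :
    volume (⋃ i, cube n (c i) s) = Fintype.card ι * ENNReal.ofReal s ^ n := by
  rw [measure_iUnion hdisj fun i => measurableSet_cube n (c i) s, tsum_fintype]
  simp [volume_cube]

lemma two_pow_mul_inv_two_pow_succ_sub_one (k : ℕ) :
    (2 : ℝ) ^ k * ((2 : ℝ) ^ (k + 1) - 1)⁻¹ = (2 - (2⁻¹ : ℝ) ^ k)⁻¹ := by
  have h : (2 : ℝ) - 2⁻¹ ^ k = ((2 : ℝ) ^ (k + 1) - 1) / 2 ^ k := by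
    field_simp
    rw [sub_mul, ← mul_pow]
    ring
  rw [h, inv_div, div_eq_mul_inv, mul_comm]

lemma tendsto_two_pow_mul_inv_two_pow_succ_sub_one :
    Tendsto (fun k : ℕ => (2 : ℝ) ^ k * ((2 : ℝ) ^ (k + 1) - 1)⁻¹) atTop (𝓝 2⁻¹) := by
  simp only [two_pow_mul_inv_two_pow_succ_sub_one]
  have h : Tendsto (fun k : ℕ => (2 : ℝ) - 2⁻¹ ^ k) atTop (𝓝 (2 - 0)) :=
    tendsto_const_nhds.sub (tendsto_pow_atTop_nhds_zero_of_lt_one (by norm_num) (by norm_num))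
  simpa using h.inv₀ (by norm_num)

theorem stmt12_general (n : ℕ) (𝒬 : ℕ → Set (Euc n)) (α : ℕ → ℝ)
    (hα : ∀ k, α k = ((2:ℝ) ^ (k + 1) - 1)⁻¹)
    (hcpt : ∀ k, IsCompact (𝒬 k))
    (hanti : ∀ k, 𝒬 (k + 1) ⊆ 𝒬 k)
    (hstruct : ∀ k, ∃ c : Fin (2 ^ (k * n)) → Euc n,
      (𝒬 k = ⋃ i, cube n (c i) (α k)) ∧
      (∀ i j, i ≠ j → Disjoint (cube n (c i) (α k)) (cube n (c j) (α k)))) :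
    IsCompact (⋂ k, 𝒬 k) ∧ volume (⋂ k, 𝒬 k) = (2 : ENNReal)⁻¹ ^ n := by
  have hvol : ∀ k, volume (𝒬 k) = ENNReal.ofReal (2 ^ k * α k) ^ n := by
    intro k
    obtain ⟨c, hc, hdisj⟩ := hstruct k
    rw [hc, volume_iUnion_cube n c (α k) hdisj, Fintype.card_fin, ENNReal.ofReal_mul (by positivity),
      mul_pow, pow_mul]
    norm_cast
  have hlim_inter : Tendsto (fun k => volume (𝒬 k)) atTop (𝓝 (volume (⋂ k, 𝒬 k))) :=
    tendsto_measure_iInter_atTop (fun k => (hcpt k).isClosed.measurableSet.nullMeasurableSet)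
      (antitone_nat_of_succ_le hanti) ⟨0, (hcpt 0).measure_lt_top.ne⟩
  have hlim_formula : Tendsto (fun k => volume (𝒬 k)) atTop (𝓝 ((2 : ENNReal)⁻¹ ^ n)) := by
    simp only [hvol, hα]
    have h := ENNReal.continuous_ofReal.tendsto _ |>.comp
      tendsto_two_pow_mul_inv_two_pow_succ_sub_one
    rw [ENNReal.ofReal_inv_of_pos two_pos, ENNReal.ofReal_ofNat] at h
    exact ENNReal.Tendsto.pow h
  exact ⟨(hcpt 0).of_isClosed_subset (isClosed_iInter fun k => (hcpt k).isClosed)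
      (iInter_subset _ 0), tendsto_nhds_unique hlim_inter hlim_formula⟩

theorem stmt12 (n : ℕ) (𝒬 : ℕ → Set (Euc n)) (α : ℕ → ℝ)
    (hα : ∀ k, α k = ((2:ℝ) ^ (k + 1) - 1)⁻¹)
    (hcpt : ∀ k, IsCompact (𝒬 k)) (hsub : ∀ k, 𝒬 k ⊆ unitCube n)
    (hanti : ∀ k, 𝒬 (k + 1) ⊆ 𝒬 k)
    (hstruct : ∀ k, ∃ c : Fin (2 ^ (k * n)) → Euc n,
      (𝒬 k = ⋃ i, cube n (c i) (α k)) ∧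
      (∀ i j, i ≠ j → Disjoint (cube n (c i) (α k)) (cube n (c j) (α k)))) :
    IsCompact (⋂ k, 𝒬 k) ∧ volume (⋂ k, 𝒬 k) = (2 : ENNReal)⁻¹ ^ n :=
  stmt12_general n 𝒬 α hα hcpt hanti hstruct
end
end

section
/- Let x ∈ ℝ^n, L : ℝ^n → ℝ linear, f : E → ℝ measurable on measurable E ⊆ ℝ^n. Suppose (r_k) is a strictly decreasing sequence with r_{k+1} ≤ r_k / 2^{k/n} and such that for all 0 < r ≤ r_k, |{y ∈ B(x,r) ∩ E : |f(y)−f(x)−L(y−x)|/|y−x| < 1/k}| ≥ ω_n r^n (1 − 2^{-k}). Define E_k = {y ∈ B(x,r_k) ∩ E : |f(y)−f(x)−L(y−x)|/|y−x| < 1/k} and E_x = ∪_{k≥1} (E_k \ B(x,r_{k+1})). Then x is a density point of E_x. -/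
open MeasureTheory Metric Set Filter Topology

noncomputable section

theorem stmt15 (n : ℕ) (hn : 1 ≤ n) (E : Set (Euc n)) (hE : MeasurableSet E)
    (f : Euc n → ℝ) (hf : Measurable f) (x : Euc n) (L : Euc n →L[ℝ] ℝ)
    (r : ℕ → ℝ) (hrpos : ∀ k, 0 < r k) (hranti : StrictAnti r)
    (hrq : ∀ k : ℕ, r (k + 1) ≤ r k / (2:ℝ) ^ ((k:ℝ) / (n:ℝ)))
    (hlower : ∀ k : ℕ, 1 ≤ k → ∀ ρ : ℝ, 0 < ρ → ρ ≤ r k →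
      volume (ball x ρ) * ENNReal.ofReal (1 - (2:ℝ) ^ (-(k:ℤ))) ≤
        volume {y | y ∈ ball x ρ ∩ E ∧ |f y - f x - L (y - x)| / ‖y - x‖ < 1 / (k:ℝ)}) :
    DensityPt (⋃ k : ℕ, ⋃ (_ : 1 ≤ k),
      ({y | y ∈ ball x (r k) ∩ E ∧ |f y - f x - L (y - x)| / ‖y - x‖ < 1 / (k:ℝ)}
        \ ball x (r (k + 1)))) x := by
  classical
  haveI : Nontrivial (Euc n) := by
    refine ⟨⟨0, EuclideanSpace.single (⟨0, hn⟩ : Fin n) (1:ℝ), ?_⟩⟩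
    intro h
    have := congrArg (fun v : Euc n => v ⟨0, hn⟩) h
    simp [EuclideanSpace.single_apply] at this
  let Ek : ℕ → Set (Euc n) := fun k =>
    {y | y ∈ ball x (r k) ∩ E ∧ |f y - f x - L (y - x)| / ‖y - x‖ < 1 / (k:ℝ)}
  show Tendsto
    (fun ρ : ℝ => volume ((⋃ k : ℕ, ⋃ (_ : 1 ≤ k), (Ek k \ ball x (r (k+1)))) ∩ ball x ρ)
      / volume (ball x ρ)) (𝓝[>] 0) (𝓝 1)
  set S : Set (Euc n) := ⋃ k : ℕ, ⋃ (_ : 1 ≤ k), (Ek k \ ball x (r (k+1))) with hSdef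
  -- measurability
  have hEkm : ∀ k, MeasurableSet (Ek k) := by
    intro k
    have hmeas : Measurable fun y : Euc n => |f y - f x - L (y - x)| / ‖y - x‖ := by
      apply Measurable.div
      · exact ((hf.sub measurable_const).sub
          (L.continuous.measurable.comp (measurable_id.sub measurable_const))).abs
      · exact (measurable_id.sub measurable_const).norm
    have h : Ek k = (ball x (r k) ∩ E) ∩
        {y | |f y - f x - L (y - x)| / ‖y - x‖ < 1 / (k:ℝ)} := rfl
    rw [h]
    exact (measurableSet_ball.inter hE).inter (measurableSet_lt hmeas measurable_const)
  have hSm : MeasurableSet S :=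
    MeasurableSet.iUnion fun k => MeasurableSet.iUnion fun _ => (hEkm k).diff measurableSet_ball
  -- arithmetic facts
  have hpow : ∀ k : ℕ, (2:ℝ) ^ (-(k:ℤ)) = ((2:ℝ)⁻¹) ^ k := by
    intro k; rw [zpow_neg, zpow_natCast, inv_pow]
  have hofReal : ∀ k : ℕ, ENNReal.ofReal ((2:ℝ) ^ (-(k:ℤ))) = (2:ENNReal)⁻¹ ^ k := by
    intro k
    rw [hpow, ENNReal.ofReal_pow (by norm_num)]
    congr 1
    rw [ENNReal.ofReal_inv_of_pos two_pos]
    norm_num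
  have hsum1 : ∀ k : ℕ, ENNReal.ofReal (1 - (2:ℝ) ^ (-(k:ℤ))) + (2:ENNReal)⁻¹ ^ k = 1 := by
    intro k
    have h1 : (0:ℝ) < (2:ℝ) ^ (-(k:ℤ)) := by positivity
    have h2 : (2:ℝ) ^ (-(k:ℤ)) ≤ 1 := by
      rw [hpow]; exact pow_le_one₀ (by norm_num) (by norm_num)
    rw [← hofReal, ← ENNReal.ofReal_add (by linarith) h1.le]
    norm_num
  have hBfin : ∀ ρ : ℝ, volume (ball x ρ) ≠ ⊤ := fun ρ => measure_ball_lt_top.ne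
  have hBne : ∀ ρ : ℝ, 0 < ρ → volume (ball x ρ) ≠ 0 := fun ρ hρ => (measure_ball_pos _ _ hρ).ne'
  -- key single-scale estimate
  have key : ∀ k : ℕ, 1 ≤ k → ∀ ρ : ℝ, 0 < ρ → ρ ≤ r k →
      volume (ball x ρ \ Ek k) ≤ volume (ball x ρ) * (2:ENNReal)⁻¹ ^ k := by
    intro k hk ρ hρ hρk
    have hsub : ball x ρ ⊆ ball x (r k) := ball_subset_ball hρk
    have hset : ball x ρ ∩ Ek k =
        {y | y ∈ ball x ρ ∩ E ∧ |f y - f x - L (y - x)| / ‖y - x‖ < 1 / (k:ℝ)} := by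
      ext y
      simp only [Ek, Set.mem_inter_iff, Set.mem_setOf_eq]
      constructor
      · rintro ⟨h1, ⟨⟨_, h3⟩, h4⟩⟩; exact ⟨⟨h1, h3⟩, h4⟩
      · rintro ⟨⟨h1, h3⟩, h4⟩; exact ⟨h1, ⟨⟨hsub h1, h3⟩, h4⟩⟩
    have h1 : volume (ball x ρ \ Ek k)
        = volume (ball x ρ) - volume (ball x ρ ∩ Ek k) := by
      rw [← Set.diff_self_inter]
      exact measure_diff Set.inter_subset_left
        ((measurableSet_ball.inter (hEkm k)).nullMeasurableSet)
        (ne_top_of_le_ne_top (hBfin ρ) (measure_mono Set.inter_subset_left))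
    have h2 := hlower k hk ρ hρ hρk
    rw [← hset] at h2
    rw [h1]
    refine (tsub_le_tsub_left h2 _).trans ?_
    rw [tsub_le_iff_right, ← mul_add, add_comm ((2:ENNReal)⁻¹ ^ k), hsum1 k, mul_one]
  -- r goes to 0
  have hhalf : ∀ j, n ≤ j → r (j + 1) ≤ r j / 2 := by
    intro j hj
    refine (hrq j).trans ?_
    have h2a : (2:ℝ) ≤ (2:ℝ) ^ ((j:ℝ) / (n:ℝ)) := by
      calc (2:ℝ) = 2 ^ (1:ℝ) := (Real.rpow_one 2).symm
        _ ≤ 2 ^ ((j:ℝ) / (n:ℝ)) := by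
            apply Real.rpow_le_rpow_of_exponent_le one_le_two
            rw [le_div_iff₀ (by positivity), one_mul]
            exact_mod_cast hj
    gcongr
    exact (hrpos j).le
  have hgeo : ∀ m, r (n + m) ≤ r n / 2 ^ m := by
    intro m
    induction m with
    | zero => simp
    | succ m ih =>
      have hstep := hhalf (n + m) (Nat.le_add_right n m)
      have : r (n + (m + 1)) = r ((n + m) + 1) := by ring_nf
      rw [this]
      refine hstep.trans ?_
      rw [pow_succ]
      calc r (n + m) / 2 ≤ (r n / 2 ^ m) / 2 := by gcongr
        _ = r n / (2 ^ m * 2) := by rw [div_div]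
  have hrsmall : ∀ d : ℝ, 0 < d → ∃ j, r j ≤ d := by
    intro d hd
    obtain ⟨m, hm⟩ := pow_unbounded_of_one_lt (r n / d) (one_lt_two (α := ℝ))
    refine ⟨n + m, (hgeo m).trans ?_⟩
    rw [div_le_iff₀ (by positivity)]
    rw [div_lt_iff₀ hd] at hm
    nlinarith [mul_comm d ((2:ℝ) ^ m)]
  -- covering
  have hcov : ∀ k, 1 ≤ k → ∀ ρ : ℝ, 0 < ρ → ρ ≤ r k →
      ball x ρ \ S ⊆ insert x (⋃ i : ℕ, (ball x (min ρ (r (k + i))) \ Ek (k + i))) := by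
    intro k hk ρ hρ hρk y hy
    obtain ⟨hyB, hyS⟩ := hy
    rcases eq_or_ne y x with h | h
    · exact Set.mem_insert_iff.mpr (Or.inl h)
    refine Set.mem_insert_iff.mpr (Or.inr ?_)
    have hd : 0 < dist y x := dist_pos.mpr h
    have hdρ : dist y x < ρ := mem_ball.mp hyB
    have hex : ∃ j, r j ≤ dist y x := hrsmall _ hd
    have hJspec : r (Nat.find hex) ≤ dist y x := Nat.find_spec hex
    have hkJ : k < Nat.find hex := by
      by_contra hle
      push_neg at hle
      have h1 : r k ≤ r (Nat.find hex) := hranti.antitone hle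
      have h2 : dist y x < r k := hdρ.trans_le hρk
      linarith
    set j := Nat.find hex - 1 with hj
    have hJ1 : Nat.find hex = j + 1 := by omega
    have hkj : k ≤ j := by omega
    have hlt : dist y x < r j := by
      have h3 := Nat.find_min hex (m := j) (by omega)
      push_neg at h3
      exact h3
    have hge : r (j + 1) ≤ dist y x := by rw [← hJ1]; exact hJspec
    have hyEk : y ∉ Ek j := by
      intro hmem
      apply hyS
      rw [hSdef]
      refine Set.mem_iUnion.mpr ⟨j, Set.mem_iUnion.mpr ⟨le_trans hk hkj, ?_⟩⟩
      exact ⟨hmem, fun hc => absurd (mem_ball.mp hc) (not_lt.mpr hge)⟩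
    refine Set.mem_iUnion.mpr ⟨j - k, ?_⟩
    have hji : k + (j - k) = j := by omega
    rw [hji]
    exact ⟨mem_ball.mpr (lt_min hdρ hlt), hyEk⟩
  -- main estimate
  have hmain : ∀ k, 1 ≤ k → ∀ ρ : ℝ, 0 < ρ → ρ ≤ r k →
      volume (ball x ρ \ S) ≤ volume (ball x ρ) * ((2:ENNReal)⁻¹ ^ k * 2) := by
    intro k hk ρ hρ hρk
    refine (measure_mono (hcov k hk ρ hρ hρk)).trans ?_
    calc volume (insert x (⋃ i : ℕ, (ball x (min ρ (r (k + i))) \ Ek (k + i))))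
        ≤ volume ({x} : Set (Euc n))
            + volume (⋃ i : ℕ, (ball x (min ρ (r (k + i))) \ Ek (k + i))) := by
          rw [Set.insert_eq]; exact measure_union_le _ _
      _ = volume (⋃ i : ℕ, (ball x (min ρ (r (k + i))) \ Ek (k + i))) := by
          rw [measure_singleton, zero_add]
      _ ≤ ∑' i : ℕ, volume (ball x (min ρ (r (k + i))) \ Ek (k + i)) := measure_iUnion_le _
      _ ≤ ∑' i : ℕ, volume (ball x ρ) * (2:ENNReal)⁻¹ ^ (k + i) := by
          refine ENNReal.tsum_le_tsum fun i => ?_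
          have h1 := key (k + i) (le_trans hk (Nat.le_add_right k i)) (min ρ (r (k + i)))
            (lt_min hρ (hrpos _)) (min_le_right _ _)
          refine h1.trans (mul_le_mul_left ?_ _)
          exact measure_mono (ball_subset_ball (min_le_left _ _))
      _ = volume (ball x ρ) * ((2:ENNReal)⁻¹ ^ k * 2) := by
          rw [ENNReal.tsum_mul_left]
          congr 1
          calc ∑' i : ℕ, (2:ENNReal)⁻¹ ^ (k + i)
              = ∑' i : ℕ, (2:ENNReal)⁻¹ ^ k * (2:ENNReal)⁻¹ ^ i := by
                exact tsum_congr fun i => pow_add _ _ _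
            _ = (2:ENNReal)⁻¹ ^ k * ∑' i : ℕ, (2:ENNReal)⁻¹ ^ i := ENNReal.tsum_mul_left
            _ = (2:ENNReal)⁻¹ ^ k * 2 := by
                rw [ENNReal.tsum_geometric, ENNReal.one_sub_inv_two, inv_inv]
  -- bad ratio tends to 0
  have hbad0 : Tendsto (fun ρ : ℝ => volume (ball x ρ \ S) / volume (ball x ρ))
      (𝓝[>] 0) (𝓝 0) := by
    rw [ENNReal.tendsto_nhds_zero]
    intro ε hε
    have htend : Tendsto (fun k : ℕ => (2:ENNReal)⁻¹ ^ k * 2) atTop (𝓝 0) := by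
      have h1 : Tendsto (fun k : ℕ => (2:ENNReal)⁻¹ ^ k) atTop (𝓝 0) :=
        ENNReal.tendsto_pow_atTop_nhds_zero_of_lt_one (by norm_num)
      simpa using ENNReal.Tendsto.mul_const h1 (Or.inr (by norm_num))
    obtain ⟨k, hk1, hkε⟩ : ∃ k : ℕ, 1 ≤ k ∧ (2:ENNReal)⁻¹ ^ k * 2 < ε :=
      ((eventually_ge_atTop 1).and (htend.eventually (gt_mem_nhds hε))).exists
    filter_upwards [Ioc_mem_nhdsGT_of_mem ⟨le_refl (0:ℝ), hrpos k⟩] with ρ hρ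
    obtain ⟨hρ0, hρk⟩ := hρ
    rw [ENNReal.div_le_iff (hBne ρ hρ0) (hBfin ρ)]
    calc volume (ball x ρ \ S) ≤ volume (ball x ρ) * ((2:ENNReal)⁻¹ ^ k * 2) :=
          hmain k hk1 ρ hρ0 hρk
      _ = ((2:ENNReal)⁻¹ ^ k * 2) * volume (ball x ρ) := mul_comm _ _
      _ ≤ ε * volume (ball x ρ) := mul_le_mul_left hkε.le _
  -- relate good and bad ratios
  have heq : (fun ρ : ℝ => volume (S ∩ ball x ρ) / volume (ball x ρ))
      =ᶠ[𝓝[>] (0:ℝ)]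
      (fun ρ : ℝ => 1 - volume (ball x ρ \ S) / volume (ball x ρ)) := by
    filter_upwards [self_mem_nhdsWithin] with ρ hρ
    have hρ0 : (0:ℝ) < ρ := hρ
    have hadd : volume (S ∩ ball x ρ) + volume (ball x ρ \ S) = volume (ball x ρ) := by
      rw [Set.inter_comm]
      exact measure_inter_add_diff _ hSm
    have hone : volume (S ∩ ball x ρ) / volume (ball x ρ)
        + volume (ball x ρ \ S) / volume (ball x ρ) = 1 := by
      rw [ENNReal.div_add_div_same, hadd, ENNReal.div_self (hBne ρ hρ0) (hBfin ρ)]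
    refine ENNReal.eq_sub_of_add_eq ?_ hone
    exact (ENNReal.div_lt_top ((measure_mono Set.diff_subset).trans_lt
      measure_ball_lt_top).ne (hBne ρ hρ0)).ne
  have hfinal : Tendsto (fun ρ : ℝ => 1 - volume (ball x ρ \ S) / volume (ball x ρ))
      (𝓝[>] 0) (𝓝 1) := by
    have h1 := ENNReal.Tendsto.sub
      (tendsto_const_nhds (x := (1:ENNReal)) (f := 𝓝[>] (0:ℝ))) hbad0 (Or.inl ENNReal.one_ne_top)
    simpa using h1
  exact hfinal.congr' heq.symm
end
end
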